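/- Let Φ be the non-selective measurement channel associated with a complete family of pairwise orthogonal projections {P_a} on ℂ^n, let ρ be a quantum state on ℂ^n, and let d ≥ 1. Then Tr(√(ρ ⊗ E₀₀) · √(ρ ⊗ (1_d/d))) = 1/√d and Tr(√(ρ ⊗ E₀₀) · √(Φ(ρ) ⊗ (1_d/d))) = Tr(√ρ · √Φ(ρ))/√d; consequently the change in squared-Hellinger-distance conditional information satisfies (2 − 2·Tr(√(ρ⊗E₀₀)·√(Φ(ρ)⊗1_d/d))) − (2 − 2·Tr(√(ρ⊗E₀₀)·√(ρ⊗1_d/d))) = (1/√d) · (2 − 2·Tr(√ρ·√Φ(ρ))). -/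

import Mathlib

/-!
The square root is multiplicative on Kronecker products of positive semidefinite matrices, so
each affinity factors as `Tr(√ρ √σ) · Tr(E₀₀ · (1/√d) 1) = Tr(√ρ √σ) / √d`; for `σ = ρ` the first
factor is `Tr ρ = 1`, and the statement about conditional information is then arithmetic.
-/

open Matrix Kronecker
open scoped ComplexOrder

noncomputable section

variable {n : Type*} [Fintype n] [DecidableEq n]

/-- `|X| = (X† X)^{1/2}`, the positive semidefinite absolute value of a matrix. -/
def matAbs (X : Matrix n n ℂ) : Matrix n n ℂ :=
  (Matrix.posSemidef_conjTranspose_mul_self X).1.eigenvectorUnitary.1 *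
    diagonal ((↑) ∘ (√·) ∘ (Matrix.posSemidef_conjTranspose_mul_self X).1.eigenvalues) *
    (star (Matrix.posSemidef_conjTranspose_mul_self X).1.eigenvectorUnitary : Matrix n n ℂ)

/-- `Tr |X|^p`, with the `p`-th power taken through the functional calculus. -/
def traceAbsPow (p : ℝ) (X : Matrix n n ℂ) : ℝ :=
  (Matrix.trace (cfc (fun x : ℝ => x ^ p) (matAbs X))).re

/-- The Schatten `p`-norm `‖X‖_p = (Tr |X|^p)^(1/p)`. -/
def schatten (p : ℝ) (X : Matrix n n ℂ) : ℝ :=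
  (traceAbsPow p X) ^ (1 / p)

/-- Matrix square root via the functional calculus (agrees with the positive semidefinite
square root on positive semidefinite matrices). -/
def msqrt (X : Matrix n n ℂ) : Matrix n n ℂ := cfc Real.sqrt X

/-- Matrix natural logarithm via the functional calculus. -/
def mlog (X : Matrix n n ℂ) : Matrix n n ℂ := cfc Real.log X

/-- Von Neumann entropy `S(ρ) = -Tr(ρ log ρ)`. -/
def vnEntropy (ρ : Matrix n n ℂ) : ℝ := -(Matrix.trace (ρ * mlog ρ)).re

/-- Relative entropy `S(ρ‖σ) = Tr(ρ log ρ) - Tr(ρ log σ)`. -/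
def relEnt (ρ σ : Matrix n n ℂ) : ℝ :=
  (Matrix.trace (ρ * mlog ρ)).re - (Matrix.trace (ρ * mlog σ)).re

/-- Uhlmann fidelity `F(ρ,σ) = (Tr|√σ √ρ|)²`. -/
def fidelity (ρ σ : Matrix n n ℂ) : ℝ :=
  ((Matrix.trace (matAbs (msqrt σ * msqrt ρ))).re) ^ 2

/-- Partial trace over the second factor. -/
def ptraceE {S E : Type*} [Fintype E] (Ω : Matrix (S × E) (S × E) ℂ) : Matrix S S ℂ :=
  Matrix.of fun s s' => ∑ e, Ω (s, e) (s', e)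

/-- Partial trace over the first factor. -/
def ptraceS {S E : Type*} [Fintype S] (Ω : Matrix (S × E) (S × E) ℂ) : Matrix E E ℂ :=
  Matrix.of fun e e' => ∑ s, Ω (s, e) (s, e')

open scoped MatrixOrder

lemma posSemidef_single_one {m : Type*} [DecidableEq m] (i : m) :
    (single i i (1 : ℂ)).PosSemidef := by
  rw [← diagonal_single, posSemidef_diagonal_iff]
  intro j
  by_cases hj : j = i <;> simp [hj]

lemma posSemidef_ofReal_smul_one {m : Type*} [DecidableEq m] {c : ℝ} (hc : 0 ≤ c) :
    ((c : ℂ) • (1 : Matrix m m ℂ)).PosSemidef :=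
  PosSemidef.one.smul (Complex.zero_le_real.mpr hc)

lemma posSemidef_sum_mul_mul_of_conjTranspose_eq {m ι : Type*} [Fintype m] [Fintype ι] {P : ι → Matrix m m ℂ}
    (hP : ∀ a, (P a)ᴴ = P a) {ρ : Matrix m m ℂ} (hρ : ρ.PosSemidef) :
    (∑ a, P a * ρ * P a).PosSemidef :=
  posSemidef_sum _ fun a _ => by simpa only [hP a] using hρ.mul_mul_conjTranspose_same (P a)

section
variable {m : Type*} [Fintype m] [DecidableEq m]

lemma msqrt_eq_sqrt {A : Matrix n n ℂ} (hA : A.PosSemidef) : msqrt A = CFC.sqrt A := by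
  rw [CFC.sqrt_eq_real_sqrt A hA.nonneg, cfcₙ_eq_cfc]
  rfl

lemma posSemidef_msqrt {A : Matrix n n ℂ} (hA : A.PosSemidef) : (msqrt A).PosSemidef := by
  rw [msqrt_eq_sqrt hA]
  exact (CFC.sqrt_nonneg A).posSemidef

lemma msqrt_mul_msqrt {A : Matrix n n ℂ} (hA : A.PosSemidef) : msqrt A * msqrt A = A := by
  rw [msqrt_eq_sqrt hA]
  exact CFC.sqrt_mul_sqrt_self A hA.nonneg

lemma msqrt_eq_of_mul_self_eq {A B : Matrix n n ℂ} (hB : B.PosSemidef) (h : B * B = A) :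
    msqrt A = B := by
  have hBB : (B * B).PosSemidef := by
    nth_rw 1 [← hB.isHermitian.eq]
    exact posSemidef_conjTranspose_mul_self B
  rw [← h, msqrt_eq_sqrt hBB]
  exact CFC.sqrt_mul_self B hB.nonneg

lemma msqrt_kronecker {A : Matrix n n ℂ} {B : Matrix m m ℂ} (hA : A.PosSemidef)
    (hB : B.PosSemidef) : msqrt (A ⊗ₖ B) = msqrt A ⊗ₖ msqrt B :=
  msqrt_eq_of_mul_self_eq ((posSemidef_msqrt hA).kronecker (posSemidef_msqrt hB)) <| by
    rw [← mul_kronecker_mul, msqrt_mul_msqrt hA, msqrt_mul_msqrt hB]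

lemma trace_msqrt_kronecker_mul_msqrt_kronecker {A C : Matrix n n ℂ} {B D : Matrix m m ℂ}
    (hA : A.PosSemidef) (hB : B.PosSemidef) (hC : C.PosSemidef) (hD : D.PosSemidef) :
    trace (msqrt (A ⊗ₖ B) * msqrt (C ⊗ₖ D))
      = trace (msqrt A * msqrt C) * trace (msqrt B * msqrt D) := by
  rw [msqrt_kronecker hA hB, msqrt_kronecker hC hD, ← mul_kronecker_mul, trace_kronecker]

lemma msqrt_single_one (i : m) : msqrt (single i i (1 : ℂ)) = single i i 1 :=
  msqrt_eq_of_mul_self_eq (posSemidef_single_one i) (by rw [single_mul_single_same, one_mul])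

lemma msqrt_ofReal_smul_one {c : ℝ} (hc : 0 ≤ c) :
    msqrt ((c : ℂ) • (1 : Matrix m m ℂ)) = (√c : ℂ) • 1 :=
  msqrt_eq_of_mul_self_eq (posSemidef_ofReal_smul_one (Real.sqrt_nonneg c)) <| by
    rw [smul_mul_smul_comm, one_mul, ← Complex.ofReal_mul, Real.mul_self_sqrt hc]

lemma trace_msqrt_single_mul_msqrt_ofReal_smul_one (i : m) {c : ℝ} (hc : 0 ≤ c) :
    trace (msqrt (single i i (1 : ℂ)) * msqrt ((c : ℂ) • (1 : Matrix m m ℂ))) = √c := by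
  rw [msqrt_single_one, msqrt_ofReal_smul_one hc, mul_smul_comm, mul_one, trace_smul,
    trace_single_eq_same, smul_eq_mul, mul_one]

end

theorem hellinger_conditional_information_general
    {n ι : Type*} [Fintype n] [DecidableEq n] [Fintype ι]
    (P : ι → Matrix n n ℂ)
    (hherm : ∀ a, (P a)ᴴ = P a)
    (ρ : Matrix n n ℂ) (hρ : ρ.PosSemidef) (htr : ρ.trace = 1)
    (d : ℕ) (hd : 1 ≤ d) :
    (Matrix.trace (msqrt (ρ ⊗ₖ Matrix.single (⟨0, hd⟩ : Fin d) ⟨0, hd⟩ (1 : ℂ))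
        * msqrt (ρ ⊗ₖ ((d : ℂ)⁻¹ • (1 : Matrix (Fin d) (Fin d) ℂ))))).re
      = 1 / Real.sqrt d ∧
    (Matrix.trace (msqrt (ρ ⊗ₖ Matrix.single (⟨0, hd⟩ : Fin d) ⟨0, hd⟩ (1 : ℂ))
        * msqrt ((∑ a, P a * ρ * P a) ⊗ₖ ((d : ℂ)⁻¹ • (1 : Matrix (Fin d) (Fin d) ℂ))))).re
      = (Matrix.trace (msqrt ρ * msqrt (∑ a, P a * ρ * P a))).re / Real.sqrt d ∧
    (2 - 2 * (Matrix.trace (msqrt (ρ ⊗ₖ Matrix.single (⟨0, hd⟩ : Fin d) ⟨0, hd⟩ (1 : ℂ))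
        * msqrt ((∑ a, P a * ρ * P a) ⊗ₖ ((d : ℂ)⁻¹ • (1 : Matrix (Fin d) (Fin d) ℂ))))).re)
      - (2 - 2 * (Matrix.trace (msqrt (ρ ⊗ₖ Matrix.single (⟨0, hd⟩ : Fin d) ⟨0, hd⟩ (1 : ℂ))
        * msqrt (ρ ⊗ₖ ((d : ℂ)⁻¹ • (1 : Matrix (Fin d) (Fin d) ℂ))))).re)
      = (1 / Real.sqrt d)
        * (2 - 2 * (Matrix.trace (msqrt ρ * msqrt (∑ a, P a * ρ * P a))).re) := by
  have hcast : (d : ℂ)⁻¹ • (1 : Matrix (Fin d) (Fin d) ℂ) = (((d : ℝ)⁻¹ : ℝ) : ℂ) • 1 := by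
    push_cast; rfl
  have hd_inv : (0 : ℝ) ≤ (d : ℝ)⁻¹ := by positivity
  have henv : trace (msqrt (single (⟨0, hd⟩ : Fin d) ⟨0, hd⟩ (1 : ℂ))
      * msqrt ((((d : ℝ)⁻¹ : ℝ) : ℂ) • (1 : Matrix (Fin d) (Fin d) ℂ))) = ((√d)⁻¹ : ℝ) := by
    rw [trace_msqrt_single_mul_msqrt_ofReal_smul_one _ hd_inv, Real.sqrt_inv]
  have haff (σ : Matrix n n ℂ) (hσ : σ.PosSemidef) :
      (trace (msqrt (ρ ⊗ₖ single (⟨0, hd⟩ : Fin d) ⟨0, hd⟩ (1 : ℂ))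
        * msqrt (σ ⊗ₖ ((((d : ℝ)⁻¹ : ℝ) : ℂ) • (1 : Matrix (Fin d) (Fin d) ℂ))))).re
        = (trace (msqrt ρ * msqrt σ)).re / √d := by
    rw [trace_msqrt_kronecker_mul_msqrt_kronecker hρ (posSemidef_single_one _) hσ
      (posSemidef_ofReal_smul_one hd_inv), henv, Complex.re_mul_ofReal, div_eq_mul_inv]
  have hself : (trace (msqrt ρ * msqrt ρ)).re = 1 := by
    rw [msqrt_mul_msqrt hρ, htr, Complex.one_re]
  have hΦρ := posSemidef_sum_mul_mul_of_conjTranspose_eq hherm hρ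
  rw [hcast, haff ρ hρ, haff _ hΦρ, hself]
  exact ⟨rfl, rfl, by ring⟩

/-- Hellinger affinities with the environment and the change in squared-Hellinger-distance
conditional information: `Δ = (1/√d)·d²_He(ρ, Φ(ρ))`. -/
theorem hellinger_conditional_information
    {n ι : Type*} [Fintype n] [DecidableEq n] [Fintype ι]
    (P : ι → Matrix n n ℂ)
    (hproj : ∀ a, P a * P a = P a)
    (hherm : ∀ a, (P a)ᴴ = P a)
    (horth : ∀ a b, a ≠ b → P a * P b = 0)
    (hsum : ∑ a, P a = 1)
    (ρ : Matrix n n ℂ) (hρ : ρ.PosSemidef) (htr : ρ.trace = 1)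
    (d : ℕ) (hd : 1 ≤ d) :
    (Matrix.trace (msqrt (ρ ⊗ₖ Matrix.single (⟨0, hd⟩ : Fin d) ⟨0, hd⟩ (1 : ℂ))
        * msqrt (ρ ⊗ₖ ((d : ℂ)⁻¹ • (1 : Matrix (Fin d) (Fin d) ℂ))))).re
      = 1 / Real.sqrt d ∧
    (Matrix.trace (msqrt (ρ ⊗ₖ Matrix.single (⟨0, hd⟩ : Fin d) ⟨0, hd⟩ (1 : ℂ))
        * msqrt ((∑ a, P a * ρ * P a) ⊗ₖ ((d : ℂ)⁻¹ • (1 : Matrix (Fin d) (Fin d) ℂ))))).re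
      = (Matrix.trace (msqrt ρ * msqrt (∑ a, P a * ρ * P a))).re / Real.sqrt d ∧
    (2 - 2 * (Matrix.trace (msqrt (ρ ⊗ₖ Matrix.single (⟨0, hd⟩ : Fin d) ⟨0, hd⟩ (1 : ℂ))
        * msqrt ((∑ a, P a * ρ * P a) ⊗ₖ ((d : ℂ)⁻¹ • (1 : Matrix (Fin d) (Fin d) ℂ))))).re)
      - (2 - 2 * (Matrix.trace (msqrt (ρ ⊗ₖ Matrix.single (⟨0, hd⟩ : Fin d) ⟨0, hd⟩ (1 : ℂ))
        * msqrt (ρ ⊗ₖ ((d : ℂ)⁻¹ • (1 : Matrix (Fin d) (Fin d) ℂ))))).re)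
      = (1 / Real.sqrt d)
        * (2 - 2 * (Matrix.trace (msqrt ρ * msqrt (∑ a, P a * ρ * P a))).re) :=
  hellinger_conditional_information_general P hherm ρ hρ htr d hd
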